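/- arXiv:1606.05379 — 2 statements merged into one kernel-verified Lean document; each statement's English description precedes it below -/
import Mathlib

section
/- If a normal space X is the union of a sequence of open subsets U_1, U_2, ... with cl(U_n) ⊆ U_{n+1} and each U_n contracting to a point in U_{n+1}, and moreover there exists an open subset V of X that contracts to a point p_0 ∈ V within X fixing p_0, then X is contractible. -/
/-!
Shift the indices so that `p₀ ∈ U 0`. Following a contraction of `U n` to some point `p` inside
`U (n + 1)` and then running the track of `p₀` backwards gives a contraction of `U n` to `p₀`
whose loop at `p₀` has the form `γ · γ⁻¹`, hence is null-homotopic.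

Stage `n` of an infinite homotopy applies the contraction of `U (n + 1)`, damped by an Urysohn
function that is `1` on `U n` and `0` off `U (n + 1)`, so it fixes everything outside `U (n + 1)`.
Points that an earlier stage has already brought to `p₀` run instead through the loop of `p₀`,
shrunk along its null-homotopy, and from stage `k + 1` on the points of `U k` do not move at all.
So every point has a neighbourhood on which all but finitely many stages are constant at `p₀`, and
running stage `n` during `[n, n + 1]` and reparametrizing `[0, ∞]` as `[0, 1]` contracts `X`.
-/

open unitInterval Set Filter Topology

theorem unitInterval.eventually_le_div_one_sub (R : ℝ) :
    ∀ᶠ s : I in 𝓝 1, (s : ℝ) < 1 → R ≤ s / (1 - s) := by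
  set c := max R 0
  have hc : c / (1 + c) < ((1 : I) : ℝ) := (div_lt_one (by positivity)).2 (by simp)
  filter_upwards [(isOpen_lt continuous_const continuous_subtype_val).mem_nhds hc]
    with s (hs : c / (1 + c) < s) hs1
  rw [le_div_iff₀ (sub_pos.2 hs1)]
  rw [div_lt_iff₀ (by positivity)] at hs
  nlinarith [mul_le_mul_of_nonneg_right (le_max_left R 0) (sub_pos.2 hs1).le]

theorem locallyFinite_Icc_nat_add_one : LocallyFinite fun k : ℕ => Icc (k : ℝ) (k + 1) := by
  intro r
  refine ⟨Ioo (r - 1) (r + 1), Ioo_mem_nhds (by linarith) (by linarith),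
    (finite_lt_nat ⌈r + 1⌉₊).subset ?_⟩
  rintro k ⟨s, hsk, hsr⟩
  exact Nat.lt_ceil.2 (hsk.1.trans_lt hsr.2)

section InfiniteConcatenation

variable {X Y : Type*} [TopologicalSpace X] [TopologicalSpace Y]

theorem ContinuousMap.homotopic_const_of_eventually_eq {f : C(X, Y)} {y₀ : Y} {G : ℝ × X → Y}
    (hG : Continuous G) (hG₀ : ∀ x, G (0, x) = f x)
    (hGy₀ : ∀ x, ∀ᶠ p in atTop ×ˢ 𝓝 x, G p = y₀) :
    f.Homotopic (ContinuousMap.const X y₀) := by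
  let H : I × X → Y := fun q => if (q.1 : ℝ) < 1 then G (q.1 / (1 - q.1), q.2) else y₀
  have hH : Continuous H := by
    refine continuous_iff_continuousAt.2 fun ⟨t, x⟩ => ?_
    rcases t.2.2.lt_or_eq with ht | ht
    · have hopen : IsOpen {q : I × X | (q.1 : ℝ) < 1} := isOpen_lt (by fun_prop) (by fun_prop)
      refine ContinuousAt.congr ?_
        (eventuallyEq_of_mem (hopen.mem_nhds ht) fun q hq => (if_pos hq).symm)
      have hden : (1 : ℝ) - (t : ℝ) ≠ 0 := sub_ne_zero.2 ht.ne'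
      exact hG.continuousAt.comp (by fun_prop (disch := exact hden))
    · obtain rfl : t = 1 := Subtype.ext ht
      obtain ⟨P, hP, Q, hQ, hPQ⟩ := eventually_prod_iff.1 (hGy₀ x)
      obtain ⟨R, hR⟩ := eventually_atTop.1 hP
      refine (continuousAt_const (y := y₀)).congr (EventuallyEq.symm ?_)
      rw [nhds_prod_eq]
      filter_upwards [(eventually_le_div_one_sub R).prod_mk hQ] with ⟨s, y⟩ ⟨hs, hy⟩
      show (if (s : ℝ) < 1 then G (s / (1 - s), y) else y₀) = y₀
      split_ifs with hs1
      exacts [hPQ (hR _ (hs hs1)) hy, rfl]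
  exact ⟨{ toFun := H
           continuous_toFun := hH
           map_zero_left := fun x => by simp [H, hG₀]
           map_one_left := fun x => by simp [H] }⟩

namespace ContinuousMap.Homotopy

noncomputable def seqConcat {f : ℕ → C(X, Y)} (F : ∀ n, (f n).Homotopy (f (n + 1)))
    (p : ℝ × X) : Y :=
  F ⌊p.1⌋₊ (projIcc 0 1 zero_le_one (p.1 - ⌊p.1⌋₊), p.2)

variable {f : ℕ → C(X, Y)} (F : ∀ n, (f n).Homotopy (f (n + 1)))

theorem seqConcat_zero (x : X) : seqConcat F (0, x) = f 0 x := by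
  simp [seqConcat]

theorem seqConcat_eqOn_Icc (k : ℕ) :
    EqOn (seqConcat F) (fun p => F k (projIcc 0 1 zero_le_one (p.1 - k), p.2))
      (Prod.fst ⁻¹' Icc (k : ℝ) (k + 1)) := by
  rintro ⟨r, x⟩ ⟨hkr, hrk⟩
  rcases hrk.lt_or_eq with hrk | rfl
  · obtain rfl : ⌊r⌋₊ = k :=
      (Nat.floor_eq_iff ((Nat.cast_nonneg k).trans hkr)).2 ⟨hkr, hrk⟩
    rfl
  · have hfloor : ⌊(k : ℝ) + 1⌋₊ = k + 1 := by exact_mod_cast Nat.floor_natCast (k + 1)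
    simp [seqConcat, hfloor]

theorem continuous_seqConcat : Continuous (seqConcat F) := by
  have hOn : ContinuousOn (seqConcat F) (Prod.fst ⁻¹' Ici 0) :=
    (locallyFinite_Icc_nat_add_one.preimage_continuous continuous_fst).continuousOn_iUnion
      (fun k => isClosed_Icc.preimage continuous_fst)
      (fun k => (Continuous.continuousOn (by fun_prop)).congr (seqConcat_eqOn_Icc F k))
      |>.mono fun p (hp : 0 ≤ p.1) =>
        mem_iUnion.2 ⟨⌊p.1⌋₊, Nat.floor_le hp, (Nat.lt_floor_add_one _).le⟩
  have hmax : seqConcat F = seqConcat F ∘ fun p => (max p.1 0, p.2) := by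
    ext ⟨r, x⟩
    rcases le_total r 0 with hr | hr
    · simp [seqConcat, hr, Nat.floor_of_nonpos hr, projIcc_of_le_left]
    · simp [hr]
  rw [hmax]
  exact hOn.comp_continuous (by fun_prop) fun p =>
    show (0 : ℝ) ≤ max p.1 0 from le_max_right _ _

theorem homotopic_const_of_eventually_eq (y₀ : Y)
    (hF : ∀ x, ∀ᶠ p in atTop ×ˢ 𝓝 x, ∀ t, F p.1 (t, p.2) = y₀) :
    (f 0).Homotopic (ContinuousMap.const X y₀) :=
  ContinuousMap.homotopic_const_of_eventually_eq (continuous_seqConcat F) (seqConcat_zero F)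
    fun x => ((tendsto_nat_floor_atTop.prodMap tendsto_id).eventually (hF x)).mono
      fun _ h => h _

end ContinuousMap.Homotopy

end InfiniteConcatenation

section ContractionLoop

variable {X : Type*} [TopologicalSpace X]

def contractionLoop {s : Set X} {x₀ : X}
    (F : ((ContinuousMap.id X).restrict s).Homotopy (ContinuousMap.const s x₀))
    (hx₀ : x₀ ∈ s) : Path x₀ x₀ where
  toFun t := F (t, ⟨x₀, hx₀⟩)
  source' := F.apply_zero _
  target' := F.apply_one _

theorem exists_contraction_with_nullhomotopic_loop {s t : Set X} {x₀ p : X} (hx₀ : x₀ ∈ s)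
    {f : s × I → X} (hf : Continuous f) (hf₀ : ∀ x, f (x, 0) = x)
    (hf₁ : ∀ x, f (x, 1) = p) (hft : ∀ z, f z ∈ t) :
    ∃ D : ((ContinuousMap.id X).restrict s).Homotopy (ContinuousMap.const s x₀),
      (∀ z, D z ∈ t) ∧ (contractionLoop D hx₀).Homotopic (Path.refl x₀) := by
  let F : ((ContinuousMap.id X).restrict s).Homotopy (ContinuousMap.const s p) :=
    { toFun := fun q => f (q.2, q.1)
      continuous_toFun := hf.comp continuous_swap
      map_zero_left := hf₀
      map_one_left := hf₁ }
  let γ : Path x₀ p := F.evalAt ⟨x₀, hx₀⟩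
  refine ⟨F.trans γ.symm.toHomotopyConst, fun z => ?_, ?_⟩
  · rw [ContinuousMap.Homotopy.trans_apply]
    split_ifs
    exacts [hft _, hft _]
  · have hloop : contractionLoop (F.trans γ.symm.toHomotopyConst) hx₀ = γ.trans γ.symm :=
      Path.ext <| funext fun τ =>
        show (F.trans γ.symm.toHomotopyConst) (τ, ⟨x₀, hx₀⟩) = (γ.trans γ.symm) τ by
          rw [ContinuousMap.Homotopy.trans_apply, Path.trans_apply]
          split_ifs <;> rfl
    exact hloop ▸ Path.Homotopic.trans_symm γ

end ContractionLoop

section ExtendById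

variable {X Y : Type*} {s : Set Y}

open Classical in
noncomputable def extendById (F : I × s → Y) (p : I × Y) : Y :=
  if h : p.2 ∈ s then F (p.1, ⟨p.2, h⟩) else p.2

theorem extendById_of_mem (F : I × s → Y) {y : Y} (hy : y ∈ s) (t : I) :
    extendById F (t, y) = F (t, ⟨y, hy⟩) :=
  dif_pos hy

theorem extendById_of_notMem (F : I × s → Y) {y : Y} (hy : y ∉ s) (t : I) :
    extendById F (t, y) = y :=
  dif_neg hy

theorem extendById_zero {F : I × s → Y} (hF₀ : ∀ y, F (0, y) = y) (y : Y) :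
    extendById F (0, y) = y := by
  by_cases hy : y ∈ s
  · rw [extendById_of_mem F hy, hF₀]
  · exact extendById_of_notMem F hy 0

variable [TopologicalSpace X] [TopologicalSpace Y]

theorem continuousOn_extendById {F : I × s → Y} (hF : Continuous F) :
    ContinuousOn (extendById F) (univ ×ˢ s) := by
  rw [continuousOn_iff_continuous_domRestrict]
  convert hF.comp (continuous_subtype_val.fst.prodMk
    (continuous_subtype_val.snd.subtype_mk fun p : ↥(univ ×ˢ s) => p.2.2)) using 1
  ext ⟨⟨t, y⟩, -, hy⟩
  exact extendById_of_mem F hy t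

theorem Continuous.extendById_cutoff {F : I × s → Y} (hF : Continuous F)
    (hF₀ : ∀ y, F (0, y) = y) (hs : IsOpen s) {g : X → Y} (hg : Continuous g) {φ : X → I}
    (hφ : Continuous φ) (hφg : tsupport φ ⊆ g ⁻¹' s) :
    Continuous fun p : I × X => extendById F (φ p.2 * p.1, g p.2) := by
  refine continuous_iff_continuousAt.2 fun ⟨t, x⟩ => ?_
  by_cases hx : x ∈ tsupport φ
  · exact ContinuousAt.comp (x := (t, x)) (f := fun p : I × X => (φ p.2 * p.1, g p.2))
      ((continuousOn_extendById hF).continuousAt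
        (prod_mem_nhds univ_mem (hs.mem_nhds (hφg hx)))) (by fun_prop)
  · refine ((hg.comp continuous_snd).continuousAt).congr ?_
    filter_upwards [continuous_snd.continuousAt.eventually (notMem_tsupport_iff_eventuallyEq.1 hx)]
      with p hp
    simp [hp, extendById_zero hF₀]

end ExtendById

structure ContractionTower (X : Type*) [TopologicalSpace X] where
  W : ℕ → Set X
  base : X
  isOpen_W : ∀ n, IsOpen (W n)
  exists_mem_W : ∀ x, ∃ n, x ∈ W n
  base_mem_W : ∀ n, base ∈ W n
  contraction : ∀ n,
    ((ContinuousMap.id X).restrict (W n)).Homotopy (ContinuousMap.const (W n) base)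
  contraction_mem_W : ∀ n p, contraction n p ∈ W (n + 1)
  loop_homotopic : ∀ n,
    (contractionLoop (contraction n) (base_mem_W n)).Homotopic (Path.refl base)
  bump : ℕ → C(X, ℝ)
  bump_zero : bump 0 = 0
  bump_succ_eq_zero : ∀ n, EqOn (bump (n + 1)) 0 (W (n + 1))ᶜ
  bump_succ_eq_one : ∀ n, EqOn (bump (n + 1)) 1 (W n)

namespace ContractionTower

variable {X : Type*} [TopologicalSpace X] (T : ContractionTower X)

theorem mem_W_of_bump_succ_ne_zero {n : ℕ} {x : X} (hx : T.bump (n + 1) x ≠ 0) :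
    x ∈ T.W (n + 1) :=
  not_not.1 fun h => hx (T.bump_succ_eq_zero n h)

theorem bump_succ_eq_one_of_ne_zero {n : ℕ} {x : X} (hx : T.bump n x ≠ 0) :
    T.bump (n + 1) x = 1 := by
  cases n with
  | zero => simp [T.bump_zero] at hx
  | succ n => exact T.bump_succ_eq_one _ (T.mem_W_of_bump_succ_ne_zero hx)

theorem monotone_W : Monotone T.W :=
  monotone_nat_of_le_succ fun n x hx =>
    T.mem_W_of_bump_succ_ne_zero (by simp [T.bump_succ_eq_one n hx])

theorem bump_eq_one_of_mem {k n : ℕ} {x : X} (hx : x ∈ T.W k) (hkn : k < n) :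
    T.bump n x = 1 := by
  obtain ⟨m, rfl⟩ := Nat.exists_eq_add_of_lt hkn
  exact T.bump_succ_eq_one _ (T.monotone_W (by omega) hx)

noncomputable def loopHomotopy (n : ℕ) :
    (contractionLoop (T.contraction n) (T.base_mem_W n)).Homotopy (Path.refl T.base) :=
  (T.loop_homotopic n).some

/-- Where `T.bump n > 2 / 3` the point has already reached `T.base`; instead of being moved by
`T.contraction (n + 1)` it follows the loop of the base point, deformed along `T.loopHomotopy`
until it is constant where `T.bump n = 1`. -/
noncomputable def stage (n : ℕ) (g : X → X) (p : I × X) : X :=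
  if T.bump n p.2 ≤ 2 / 3 then
    extendById (T.contraction (n + 1))
      (projIcc 0 1 zero_le_one (3 * T.bump (n + 1) p.2 - 1) * p.1, g p.2)
  else T.loopHomotopy (n + 1) (projIcc 0 1 zero_le_one (3 * T.bump n p.2 - 2), p.1)

structure Admissible (n : ℕ) (g : X → X) : Prop where
  continuous : Continuous g
  eq_or_mem : ∀ x, g x = x ∨ g x ∈ T.W (n + 1)
  eq_base : ∀ x, 2 / 3 ≤ T.bump n x → g x = T.base

variable {T}

theorem Admissible.mem_W {n : ℕ} {g : X → X} (hg : T.Admissible n g) {x : X}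
    (hx : x ∈ T.W (n + 1)) : g x ∈ T.W (n + 1) :=
  (hg.eq_or_mem x).elim (fun h => by rwa [h]) id

theorem Admissible.continuous_stage {n : ℕ} {g : X → X} (hg : T.Admissible n g) :
    Continuous (T.stage n g) := by
  have hsupp : tsupport (fun x => projIcc 0 1 zero_le_one (3 * T.bump (n + 1) x - 1)) ⊆
      g ⁻¹' T.W (n + 1) := by
    refine (closure_minimal (fun x hx => ?_)
      (isClosed_le continuous_const (T.bump (n + 1)).continuous)).trans
      fun x (hx : 1 / 3 ≤ T.bump (n + 1) x) =>
        hg.mem_W (T.mem_W_of_bump_succ_ne_zero (by linarith : (0 : ℝ) < _).ne')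
    by_contra! h
    simp only [mem_ofPred_eq, not_le] at h
    exact hx (projIcc_of_le_left _ (by linarith))
  refine Continuous.if_le (Continuous.extendById_cutoff (T.contraction (n + 1)).continuous
    (T.contraction (n + 1)).apply_zero (T.isOpen_W _) hg.continuous (by fun_prop) hsupp)
    ((T.loopHomotopy (n + 1)).continuous.comp (by fun_prop)) (by fun_prop) continuous_const ?_
  rintro ⟨t, x⟩ (hx : T.bump n x = 2 / 3)
  have hbump : T.bump (n + 1) x = 1 := T.bump_succ_eq_one_of_ne_zero (by rw [hx]; norm_num)
  have h₁ : projIcc 0 1 zero_le_one (3 * T.bump (n + 1) x - 1) = 1 :=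
    projIcc_of_right_le _ (by rw [hbump]; norm_num)
  have h₀ : projIcc 0 1 zero_le_one (3 * T.bump n x - 2) = 0 :=
    projIcc_of_le_left _ (by rw [hx]; norm_num)
  simp only [h₀, h₁, one_mul, hg.eq_base x hx.ge, extendById_of_mem _ (T.base_mem_W _)]
  exact ((T.loopHomotopy (n + 1)).apply_zero t).symm

theorem Admissible.stage_zero {n : ℕ} {g : X → X} (hg : T.Admissible n g) (x : X) :
    T.stage n g (0, x) = g x := by
  unfold stage
  split_ifs with hx
  · rw [mul_zero, extendById_zero (T.contraction (n + 1)).apply_zero]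
  · rw [Path.Homotopy.source, hg.eq_base x (not_le.1 hx).le]

theorem Admissible.stage_one {n : ℕ} {g : X → X} (hg : T.Admissible n g) :
    T.Admissible (n + 1) fun x => T.stage n g (1, x) := by
  refine ⟨hg.continuous_stage.comp (continuous_const.prodMk continuous_id), fun x => ?_,
    fun x hx => ?_⟩
  · unfold stage
    split_ifs
    · by_cases hgx : g x ∈ T.W (n + 1)
      · exact Or.inr (by rw [extendById_of_mem _ hgx]; exact T.contraction_mem_W _ _)
      · rw [extendById_of_notMem _ hgx]
        exact (hg.eq_or_mem x).imp_right hgx.elim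
    · rw [Path.Homotopy.target]
      exact Or.inr (T.base_mem_W _)
  · unfold stage
    split_ifs
    · have hgx := hg.mem_W (T.mem_W_of_bump_succ_ne_zero (by linarith : (0 : ℝ) < _).ne')
      rw [projIcc_of_right_le _ (by linarith), extendById_of_mem _ hgx]
      simp
    · exact Path.Homotopy.target _ _

variable (T)

theorem stage_of_bump_eq_one {n : ℕ} (g : X → X) {x : X} (hx : T.bump n x = 1) (t : I) :
    T.stage n g (t, x) = T.base := by
  have hx' : ¬ T.bump n x ≤ 2 / 3 := by rw [hx]; norm_num
  rw [stage, if_neg hx', projIcc_of_right_le _ (by rw [hx]; norm_num)]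
  exact (T.loopHomotopy (n + 1)).apply_one t

noncomputable def stageMap : ℕ → X → X
  | 0 => id
  | n + 1 => fun x => T.stage n (stageMap n) (1, x)

theorem admissible_stageMap : ∀ n, T.Admissible n (T.stageMap n)
  | 0 => ⟨continuous_id, fun _ => Or.inl rfl, fun x hx => by norm_num [T.bump_zero] at hx⟩
  | n + 1 => (admissible_stageMap n).stage_one

noncomputable def stageContinuousMap (n : ℕ) : C(X, X) :=
  ⟨T.stageMap n, (T.admissible_stageMap n).continuous⟩

noncomputable def stageHomotopy (n : ℕ) :
    (T.stageContinuousMap n).Homotopy (T.stageContinuousMap (n + 1)) where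
  toFun := T.stage n (T.stageMap n)
  continuous_toFun := (T.admissible_stageMap n).continuous_stage
  map_zero_left := (T.admissible_stageMap n).stage_zero
  map_one_left _ := by simp [stageContinuousMap, stageMap]

end ContractionTower

theorem ContractionTower.contractibleSpace {X : Type*} [TopologicalSpace X]
    (T : ContractionTower X) : ContractibleSpace X := by
  rw [contractible_iff_id_nullhomotopic]
  refine ⟨T.base, ContinuousMap.Homotopy.homotopic_const_of_eventually_eq T.stageHomotopy T.base
    fun x => ?_⟩
  obtain ⟨k, hk⟩ := T.exists_mem_W x
  filter_upwards [(eventually_gt_atTop k).prod_mk ((T.isOpen_W k).mem_nhds hk)] with p hp t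
  exact T.stage_of_bump_eq_one _ (T.bump_eq_one_of_mem hp.2 hp.1) t

theorem exists_contractionTower {X : Type*} [TopologicalSpace X] [NormalSpace X]
    {U : ℕ → Set X} (hopen : ∀ n, IsOpen (U n)) (hcl : ∀ n, closure (U n) ⊆ U (n + 1))
    (hcover : ∀ x, ∃ n, x ∈ U n) {x₀ : X} (hx₀ : x₀ ∈ U 0)
    (hcontr : ∀ n, ∃ f : (U n) × I → X, Continuous f ∧
      (∀ x : U n, f (x, 0) = (x : X)) ∧
      (∃ p : X, ∀ x : U n, f (x, 1) = p) ∧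
      (∀ z, f z ∈ U (n + 1))) :
    Nonempty (ContractionTower X) := by
  have hbase (n : ℕ) : x₀ ∈ U n :=
    monotone_nat_of_le_succ (fun n => subset_closure.trans (hcl n)) n.zero_le hx₀
  have hD (n : ℕ) : ∃ D : ((ContinuousMap.id X).restrict (U n)).Homotopy
      (ContinuousMap.const (U n) x₀),
      (∀ z, D z ∈ U (n + 1)) ∧ (contractionLoop D (hbase n)).Homotopic (Path.refl x₀) := by
    obtain ⟨f, hf, hf₀, ⟨p, hf₁⟩, hft⟩ := hcontr n
    exact exists_contraction_with_nullhomotopic_loop (hbase n) hf hf₀ hf₁ hft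
  choose D hD hloop using hD
  choose bump hbump₀ hbump₁ _ using fun n => exists_continuous_zero_one_of_isClosed
    (hopen (n + 1)).isClosed_compl isClosed_closure (disjoint_compl_left_iff_subset.2 (hcl n))
  exact ⟨{ W := U
           base := x₀
           isOpen_W := hopen
           exists_mem_W := hcover
           base_mem_W := hbase
           contraction := D
           contraction_mem_W := hD
           loop_homotopic := hloop
           bump := fun | 0 => 0 | n + 1 => bump n
           bump_zero := rfl
           bump_succ_eq_zero := hbump₀
           bump_succ_eq_one := fun n => (hbump₁ n).mono subset_closure }⟩

theorem monotone_union_contractible_of_locally_contractible_point_general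
    {X : Type*} [TopologicalSpace X] [NormalSpace X]
    (U : ℕ → Set X) (hopen : ∀ n, IsOpen (U n))
    (hcl : ∀ n, closure (U n) ⊆ U (n + 1))
    (hunion : (⋃ n, U n) = Set.univ)
    (hcontr : ∀ n, ∃ f : (U n) × I → X, Continuous f ∧
      (∀ x : U n, f (x, 0) = (x : X)) ∧
      (∃ p : X, ∀ x : U n, f (x, 1) = p) ∧
      (∀ z, f z ∈ U (n + 1)))
    (p₀ : X) :
    ContractibleSpace X := by
  have hmono : Monotone U := monotone_nat_of_le_succ fun n => subset_closure.trans (hcl n)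
  have hcover (x : X) : ∃ n, x ∈ U n := mem_iUnion.1 (hunion ▸ mem_univ x)
  obtain ⟨N, hN⟩ := hcover p₀
  obtain ⟨T⟩ := exists_contractionTower (U := fun n => U (N + n)) (fun n => hopen _)
    (fun n => hcl _) (fun x => (hcover x).imp fun m hm => hmono (by omega) hm) hN
    (fun n => hcontr _)
  exact T.contractibleSpace

/-- **Theorem 4.** If a normal space `X` is the union of a sequence of open subsets `{Uₙ}`
with `cl(Uₙ) ⊆ Uₙ₊₁` and each `Uₙ` contracting to a point in `Uₙ₊₁`, and there exists an
open `V ⊆ X` contracting to a point `p₀ ∈ V` in `X` fixing `p₀`, then `X` is contractible. -/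
theorem monotone_union_contractible_of_locally_contractible_point
    {X : Type*} [TopologicalSpace X] [NormalSpace X]
    (U : ℕ → Set X) (hopen : ∀ n, IsOpen (U n))
    (hcl : ∀ n, closure (U n) ⊆ U (n + 1))
    (hunion : (⋃ n, U n) = Set.univ)
    (hcontr : ∀ n, ∃ f : (U n) × I → X, Continuous f ∧
      (∀ x : U n, f (x, 0) = (x : X)) ∧
      (∃ p : X, ∀ x : U n, f (x, 1) = p) ∧
      (∀ z, f z ∈ U (n + 1)))
    (V : Set X) (hV : IsOpen V) (p₀ : X) (hp₀ : p₀ ∈ V)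
    (hVcontr : ∃ f : V × I → X, Continuous f ∧
      (∀ x : V, f (x, 0) = (x : X)) ∧
      (∀ x : V, f (x, 1) = p₀) ∧
      (∀ t : I, f (⟨p₀, hp₀⟩, t) = p₀)) :
    ContractibleSpace X :=
  monotone_union_contractible_of_locally_contractible_point_general U hopen hcl hunion hcontr p₀
end

section
/- If X is an absolute neighborhood retract (for metric spaces) that is the union of a sequence of open subsets U_1, U_2, ... such that for each n ≥ 1, cl(U_n) ⊆ U_{n+1} and U_n contracts to a point in U_{n+1}, then X is contractible. -/
open unitInterval

/-- A metrizable space `X` is an *absolute neighborhood retract* (ANR) if every continuous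
map into `X` from a closed subset `A` of a metrizable space `Y` extends continuously over
some open neighborhood of `A` in `Y`. -/
def IsANR (X : Type) [TopologicalSpace X] : Prop :=
  TopologicalSpace.MetrizableSpace X ∧
  ∀ (Y : Type) (_ : TopologicalSpace Y), TopologicalSpace.MetrizableSpace Y →
    ∀ (A : Set Y), IsClosed A → ∀ f : A → X, Continuous f →
      ∃ O : Set Y, IsOpen O ∧ A ⊆ O ∧
        ∃ g : O → X, Continuous g ∧ ∀ (x : Y) (hA : x ∈ A) (hO : x ∈ O),
          g ⟨x, hO⟩ = f ⟨x, hA⟩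

/-!
Run the contractions one after another, stage `n` during the time interval `[n, n + 1]`: stage `n`
is the contraction of `U (2n+1)` inside `U (2n+2)`, damped by an Urysohn function to be the full
contraction on `cl U (2n)` and the identity near the boundary of `U (2n+1)`. A point of `U (2m)`
lies in `U (2n)` at the start of every stage `n ≥ m`, which sends it to the contraction point, so
from time `m + 1` on its trajectory is the same as that of any other point of `U (2m)`.
Following each trajectory up to a continuous time `T x` exceeding its merging time, and then
running the common trajectory back to its start, contracts `X`.
-/

open Set

section

variable {X : Type*} [TopologicalSpace X]

theorem exists_homotopy_contracting_closed_subset [NormalSpace X] {V K : Set X} (hV : IsOpen V)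
    (hK : IsClosed K) (hKV : K ⊆ V) {f : V × I → X} (hf : Continuous f)
    (hf0 : ∀ x, f (x, 0) = x) {p : X} (hf1 : ∀ x, f (x, 1) = p) :
    ∃ θ : C(X × I, X), (∀ x, θ (x, 0) = x) ∧ (∀ x ∈ K, θ (x, 1) = p) ∧
      ∀ z, θ z = z.1 ∨ θ z ∈ range f := by
  classical
  obtain ⟨W, hW, hKW, hWV⟩ := normal_exists_closure_subset hK hV hKV
  obtain ⟨μ, hμW, hμK, -⟩ := exists_continuous_zero_one_of_isClosed hW.isClosed_compl hK
    (disjoint_compl_left_iff_subset.2 hKW)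
  -- `μ` damps the contraction to the identity outside `W`, so `θ` is continuous across `∂V`
  let θ : X × I → X := fun z =>
    if h : z.1 ∈ V then f (⟨z.1, h⟩, projIcc 0 1 zero_le_one (μ z.1 * z.2)) else z.1
  have hθ_out : ∀ z : X × I, z.1 ∉ W → θ z = z.1 := by
    intro z hz
    by_cases h : z.1 ∈ V
    · simp [θ, h, hμW hz, hf0]
    · simp [θ, h]
  have hθ_in : ContinuousOn θ {z | z.1 ∈ V} := by
    rw [continuousOn_iff_continuous_domRestrict]
    have : ({z | z.1 ∈ V} : Set (X × I)).domRestrict θ = fun z =>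
        f (⟨z.1.1, z.2⟩, projIcc 0 1 zero_le_one (μ z.1.1 * z.1.2)) :=
      funext fun z => dif_pos z.2
    rw [this]
    fun_prop
  have hθ_near : ContinuousOn θ {z | z.1 ∉ closure W} :=
    continuous_fst.continuousOn.congr fun z hz => hθ_out z fun h => hz (subset_closure h)
  have hθ : Continuous θ := by
    refine continuous_iff_continuousAt.2 fun z => ?_
    by_cases hz : z.1 ∈ V
    · exact hθ_in.continuousAt ((hV.preimage continuous_fst).mem_nhds hz)
    · exact hθ_near.continuousAt
        ((isClosed_closure.isOpen_compl.preimage continuous_fst).mem_nhds fun h => hz (hWV h))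
  refine ⟨⟨θ, hθ⟩, fun x => ?_, fun x hx => ?_, fun z => ?_⟩
  · by_cases h : x ∈ V
    · simp [θ, h, hf0]
    · simp [θ, h]
  · simp [θ, hKV hx, hμK hx, hf1]
  · by_cases h : z.1 ∈ V
    · exact Or.inr ⟨_, (dif_pos h : θ z = _).symm⟩
    · exact Or.inl (dif_neg h : θ z = _)

variable (θ : ℕ → C(X × I, X))

def seqConcatEnd : ℕ → X → X
  | 0 => id
  | n + 1 => fun x => θ n (seqConcatEnd n x, 1)

noncomputable def seqConcat (z : X × ℝ) : X :=
  θ ⌊z.2⌋₊ (seqConcatEnd θ ⌊z.2⌋₊ z.1, projIcc 0 1 zero_le_one (z.2 - ⌊z.2⌋₊))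

variable {θ}

theorem seqConcat_eq_of_le (h0 : ∀ n x, θ n (x, 0) = x) {n : ℕ} {t : ℝ}
    (hnt : (n : ℝ) ≤ t ∨ n = 0) (htn : t ≤ n + 1) (x : X) :
    seqConcat θ (x, t) = θ n (seqConcatEnd θ n x, projIcc 0 1 zero_le_one (t - n)) := by
  rcases htn.lt_or_eq with htn | rfl
  · have hfloor : ⌊t⌋₊ = n := by
      rcases hnt with hnt | rfl
      · exact (Nat.floor_eq_iff ((Nat.cast_nonneg n).trans hnt)).2 ⟨hnt, htn⟩
      · exact Nat.floor_eq_zero.2 (by simpa using htn)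
    simp only [seqConcat, hfloor]
  · have hfloor : ⌊(n : ℝ) + 1⌋₊ = n + 1 := by exact_mod_cast Nat.floor_natCast (n + 1)
    simp [seqConcat, hfloor, h0, seqConcatEnd]

theorem seqConcat_of_nonpos (h0 : ∀ n x, θ n (x, 0) = x) {t : ℝ} (ht : t ≤ 0) (x : X) :
    seqConcat θ (x, t) = x := by
  rw [seqConcat_eq_of_le h0 (Or.inr rfl) (by linarith)]
  simp [projIcc_of_le_left _ (by simpa using ht), h0, seqConcatEnd]

@[fun_prop]
theorem continuous_seqConcatEnd (n : ℕ) : Continuous (seqConcatEnd θ n) := by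
  induction n with
  | zero => exact continuous_id
  | succ n ih => exact (θ n).continuous.comp (ih.prodMk continuous_const)

theorem continuous_seqConcat (h0 : ∀ n x, θ n (x, 0) = x) : Continuous (seqConcat θ) := by
  let S : ℕ → Set ℝ := fun n => {t | ((n : ℝ) ≤ t ∨ n = 0) ∧ t ≤ n + 1}
  have hS_closed : ∀ n, IsClosed (S n) := fun n =>
    ((isClosed_le continuous_const continuous_id).union isClosed_const).inter
      (isClosed_le continuous_id continuous_const)
  have hS_cover : ⋃ n, S n = univ := by
    refine eq_univ_of_forall fun t => mem_iUnion.2 ⟨⌊t⌋₊, ?_, (Nat.lt_floor_add_one t).le⟩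
    rcases le_or_gt 0 t with ht | ht
    · exact Or.inl (Nat.floor_le ht)
    · exact Or.inr (Nat.floor_eq_zero.2 (by linarith))
  have hS_finite : LocallyFinite S := by
    intro t
    refine ⟨Iio (t + 1), Iio_mem_nhds (by linarith), (finite_Iic ⌊t + 1⌋₊).subset ?_⟩
    rintro n ⟨s, ⟨hns | rfl, -⟩, hst⟩
    · exact Nat.le_floor (hns.trans (le_of_lt hst))
    · exact Nat.zero_le _
  refine (hS_finite.preimage_continuous continuous_snd).continuous
    (by simp [← preimage_iUnion, hS_cover]) (fun n => (hS_closed n).preimage continuous_snd)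
    fun n => ?_
  exact ContinuousOn.congr (by fun_prop) fun z hz => seqConcat_eq_of_le h0 hz.1 hz.2 z.1

variable {C : ℕ → Set X} {p : ℕ → X}

theorem seqConcatEnd_eq_self_or_mem (hC : Monotone C)
    (hθC : ∀ n x, θ n (x, 1) = x ∨ θ n (x, 1) ∈ C (n + 1)) (n : ℕ) (x : X) :
    seqConcatEnd θ n x = x ∨ seqConcatEnd θ n x ∈ C n := by
  induction n with
  | zero => exact Or.inl rfl
  | succ n ih =>
    rcases hθC n (seqConcatEnd θ n x) with h | h
    · simp only [seqConcatEnd, h]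
      exact ih.imp_right fun hx => hC n.le_succ hx
    · exact Or.inr h

theorem seqConcatEnd_succ_of_mem (hC : Monotone C)
    (hθC : ∀ n x, θ n (x, 1) = x ∨ θ n (x, 1) ∈ C (n + 1)) (hθp : ∀ n, ∀ x ∈ C n, θ n (x, 1) = p n)
    {m n : ℕ} (hmn : m ≤ n) {x : X} (hx : x ∈ C m) : seqConcatEnd θ (n + 1) x = p n := by
  refine hθp n _ ?_
  rcases seqConcatEnd_eq_self_or_mem hC hθC n x with h | h
  · rw [h]
    exact hC hmn hx
  · exact h

theorem seqConcat_eq_of_mem (hC : Monotone C)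
    (hθC : ∀ n x, θ n (x, 1) = x ∨ θ n (x, 1) ∈ C (n + 1)) (hθp : ∀ n, ∀ x ∈ C n, θ n (x, 1) = p n)
    {m : ℕ} {x y : X} (hx : x ∈ C m) (hy : y ∈ C m) {t : ℝ} (ht : (m : ℝ) + 1 ≤ t) :
    seqConcat θ (x, t) = seqConcat θ (y, t) := by
  have hfloor : m + 1 ≤ ⌊t⌋₊ := Nat.le_floor (by exact_mod_cast ht)
  obtain ⟨k, hk⟩ : ∃ k, ⌊t⌋₊ = k + 1 := ⟨⌊t⌋₊ - 1, by omega⟩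
  have hmk : m ≤ k := by omega
  simp only [seqConcat, hk, seqConcatEnd_succ_of_mem hC hθC hθp hmk hx,
    seqConcatEnd_succ_of_mem hC hθC hθp hmk hy]

theorem ContractibleSpace.of_homotopy_merging {H : X × ℝ → X} (hH : Continuous H)
    (h0 : ∀ x, H (x, 0) = x) {T : X → ℝ} (hT : Continuous T) (x₀ : X)
    (hmerge : ∀ x, H (x, T x) = H (x₀, T x)) : ContractibleSpace X := by
  rw [contractible_iff_id_nullhomotopic]
  refine ⟨x₀, ContinuousMap.Homotopic.trans (g := ⟨fun x => H (x₀, T x), by fun_prop⟩)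
    ⟨{ toFun := fun q => H (q.2, q.1 * T q.2)
       map_zero_left := fun x => by simp [h0]
       map_one_left := fun x => by simp [hmerge] }⟩
    ⟨{ toFun := fun q => H (x₀, (1 - q.1) * T q.2)
       map_zero_left := fun x => by simp
       map_one_left := fun x => by simp [h0] }⟩⟩

theorem exists_continuous_forall_exists_mem_le [NormalSpace X] (hCo : ∀ n, IsOpen (C n))
    (hCcl : ∀ n, closure (C n) ⊆ C (n + 1)) (hCcov : ⋃ n, C n = univ) :
    ∃ T : X → ℝ, Continuous T ∧ ∀ x, ∃ n, x ∈ C n ∧ (n : ℝ) ≤ T x := by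
  classical
  have hC : Monotone C := monotone_nat_of_le_succ fun n => subset_closure.trans (hCcl n)
  have hg : ∀ n, ∃ g : C(X, ℝ),
      EqOn g 0 (closure (C n)) ∧ EqOn g 1 (C (n + 1))ᶜ ∧ ∀ x, g x ∈ Icc 0 1 := fun n =>
    exists_continuous_zero_one_of_isClosed isClosed_closure (hCo _).isClosed_compl
      (disjoint_compl_right_iff_subset.2 (hCcl n))
  choose g hg0 hg1 hgI using hg
  have hg_vanish : ∀ {n k}, n ≤ k → ∀ x ∈ C n, g k x = 0 := fun hnk x hx =>
    hg0 _ (subset_closure (hC hnk hx))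
  have hcov : ∀ x, ∃ n, x ∈ C n := fun x => mem_iUnion.1 (hCcov ▸ mem_univ x)
  refine ⟨fun x => 1 + ∑ᶠ k, g k x,
    continuous_const.add (continuous_finsum (fun k => (g k).continuous) fun x => ?_), fun x => ?_⟩
  · obtain ⟨n, hn⟩ := hcov x
    refine ⟨C n, (hCo n).mem_nhds hn, (finite_Iio n).subset ?_⟩
    rintro k ⟨y, hyk, hyn⟩
    by_contra hkn
    exact hyk (hg_vanish (not_lt.1 hkn) y hyn)
  refine ⟨Nat.find (hcov x), Nat.find_spec (hcov x), ?_⟩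
  dsimp only
  rw [finsum_eq_sum_of_support_subset _ (s := Finset.range (Nat.find (hcov x))) fun k hk => ?_]
  · rcases hN : Nat.find (hcov x) with _ | j
    · simp
    -- `x ∉ C (k + 1)` for `k < j`, so each of these `g k` equals `1` at `x`
    have hone : ∀ k ∈ Finset.range j, g k x = 1 := fun k hk =>
      hg1 k (Nat.find_min (hcov x) (by simp at hk; omega))
    rw [Finset.sum_range_succ, Finset.sum_congr rfl hone]
    simp only [Finset.sum_const, Finset.card_range, nsmul_eq_mul, mul_one, Nat.cast_add, Nat.cast_one]
    linarith [(hgI j x).1]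
  · by_contra hkN
    exact hk (hg_vanish (by simpa using hkN) x (Nat.find_spec (hcov x)))

theorem ContractibleSpace.of_iUnion_eq_univ_of_contracts [NormalSpace X] (U : ℕ → Set X)
    (hopen : ∀ n, IsOpen (U n)) (hcl : ∀ n, closure (U n) ⊆ U (n + 1))
    (hunion : (⋃ n, U n) = Set.univ)
    (hcontr : ∀ n, ∃ f : (U n) × I → X, Continuous f ∧
      (∀ x : U n, f (x, 0) = (x : X)) ∧
      (∃ p : X, ∀ x : U n, f (x, 1) = p) ∧
      (∀ z, f z ∈ U (n + 1))) :
    ContractibleSpace X := by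
  have hU : Monotone U := monotone_nat_of_le_succ fun n => subset_closure.trans (hcl n)
  choose f hf hf0 hp hfU using hcontr
  choose p hp using hp
  have hstage : ∀ n, ∃ θ : C(X × I, X), (∀ x, θ (x, 0) = x) ∧
      (∀ x ∈ closure (U (2 * n)), θ (x, 1) = p (2 * n + 1)) ∧
      ∀ z, θ z = z.1 ∨ θ z ∈ range (f (2 * n + 1)) := fun n =>
    exists_homotopy_contracting_closed_subset (hopen _) isClosed_closure (hcl _) (hf _) (hf0 _) (hp _)
  choose θ hθ0 hθp hθf using hstage
  have hC : Monotone fun n => U (2 * n) := fun m n hmn => hU (by omega)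
  have hθC : ∀ n x, θ n (x, 1) = x ∨ θ n (x, 1) ∈ U (2 * (n + 1)) := fun n x =>
    (hθf n (x, 1)).imp_right fun ⟨w, hw⟩ => hw ▸ hfU _ w
  have hcov : (⋃ n, U (2 * n)) = univ :=
    eq_univ_of_forall fun x => by
      obtain ⟨n, hn⟩ := mem_iUnion.1 (hunion ▸ mem_univ x)
      exact mem_iUnion.2 ⟨n, hU (by omega) hn⟩
  obtain ⟨T, hT, hTU⟩ := exists_continuous_forall_exists_mem_le (fun n => hopen (2 * n))
    (fun n => (hcl _).trans (hU (by omega))) hcov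
  obtain ⟨m₀, hm₀, -⟩ := hTU (p 0)
  refine ContractibleSpace.of_homotopy_merging (continuous_seqConcat hθ0)
    (fun x => seqConcat_of_nonpos hθ0 le_rfl x) (T := fun x => T x + (m₀ + 1))
    (hT.add continuous_const) (p 0) fun x => ?_
  obtain ⟨n, hn, hnT⟩ := hTU x
  refine seqConcat_eq_of_mem hC hθC (fun n x hx => hθp n x (subset_closure hx))
    (hC (le_max_left n m₀) hn) (hC (le_max_right n m₀) hm₀) ?_
  push_cast
  linarith [max_le_add_of_nonneg (Nat.cast_nonneg (α := ℝ) n) (Nat.cast_nonneg (α := ℝ) m₀)]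

end

/-- **Corollary 6.** If an ANR `X` is the union of a sequence of open subsets `{Uₙ}` such
that for each `n`, `cl(Uₙ) ⊆ Uₙ₊₁` and `Uₙ` contracts to a point in `Uₙ₊₁`, then `X` is
contractible. -/
theorem anr_monotone_union_contractible
    {X : Type} [TopologicalSpace X] (hX : IsANR X)
    (U : ℕ → Set X) (hopen : ∀ n, IsOpen (U n))
    (hcl : ∀ n, closure (U n) ⊆ U (n + 1))
    (hunion : (⋃ n, U n) = Set.univ)
    (hcontr : ∀ n, ∃ f : (U n) × I → X, Continuous f ∧
      (∀ x : U n, f (x, 0) = (x : X)) ∧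
      (∃ p : X, ∀ x : U n, f (x, 1) = p) ∧
      (∀ z, f z ∈ U (n + 1))) :
    ContractibleSpace X := by
  have : TopologicalSpace.MetrizableSpace X := hX.1
  exact ContractibleSpace.of_iUnion_eq_univ_of_contracts U hopen hcl hunion hcontr
end
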